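/- Let u,v,w be three vertices of the same type with edges (u,v),(u,w) present and (v,w) absent, each following the social-capital-homophilic strategy with utility U_x = |N^τ(x)|/κ + I_x/κ. If v and w are both isolated in the subgraph induced by N(u), then adding the edge (v,w) strictly decreases the utility of u, and deleting the edge (u,v) strictly decreases the utility of both u and v provided v contributes to I_u and u contributes to I_v. -/

import Mathlib

open Finset

/-- Number of isolated vertices in the subgraph induced by the neighborhood of `v`. -/
def isoCount {V : Type*} [Fintype V] [DecidableEq V] (G : SimpleGraph V)
    [DecidableRel G.Adj] (v : V) : ℕ :=
  ((G.neighborFinset v).filter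
    (fun u => ∀ w ∈ G.neighborFinset v, ¬ G.Adj u w)).card

/-- The graph obtained from `G` by adding the edge `{a, b}`. -/
def addEdge {V : Type*} (G : SimpleGraph V) (a b : V) : SimpleGraph V where
  Adj x y := (G.Adj x y ∨ ((x = a ∧ y = b) ∨ (x = b ∧ y = a))) ∧ x ≠ y
  symm := by constructor; intro x y h; refine ⟨?_, Ne.symm h.2⟩; rcases h.1 with h | h | h
             · exact Or.inl h.symm
             · exact Or.inr (Or.inr ⟨h.2, h.1⟩)
             · exact Or.inr (Or.inl ⟨h.2, h.1⟩)
  loopless := ⟨fun x h => h.2 rfl⟩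

instance {V : Type*} [DecidableEq V] (G : SimpleGraph V) [DecidableRel G.Adj] (a b : V) :
    DecidableRel (addEdge G a b).Adj := fun x y =>
  inferInstanceAs (Decidable ((G.Adj x y ∨ ((x = a ∧ y = b) ∨ (x = b ∧ y = a))) ∧ x ≠ y))

/-- The graph obtained from `G` by deleting the edge `{a, b}`. -/
def delEdge {V : Type*} (G : SimpleGraph V) (a b : V) : SimpleGraph V where
  Adj x y := G.Adj x y ∧ ¬((x = a ∧ y = b) ∨ (x = b ∧ y = a))
  symm := by constructor; intro x y h; exact ⟨h.1.symm, by tauto⟩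
  loopless := ⟨fun x h => G.irrefl h.1⟩

instance {V : Type*} [DecidableEq V] (G : SimpleGraph V) [DecidableRel G.Adj] (a b : V) :
    DecidableRel (delEdge G a b).Adj := fun x y =>
  inferInstanceAs (Decidable (G.Adj x y ∧ ¬((x = a ∧ y = b) ∨ (x = b ∧ y = a))))


/-- Utility of an agent following the social-capital-homophilic strategy. -/
noncomputable def homCapUtil {V α : Type*} [Fintype V] [DecidableEq V] [DecidableEq α]
    (G : SimpleGraph V) [DecidableRel G.Adj] (τ : V → α) (κ : ℕ) (x : V) : ℝ :=
  (((G.neighborFinset x).filter (fun y => τ y = τ x)).card : ℝ) / κ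
    + (isoCount G x : ℝ) / κ

/-! Adding the edge `vw` inside `N(u)` changes no neighbourhood of `u` but destroys the isolation of
`v` there, so `I_u` drops while `|N^τ(u)|` stays. Deleting `uv` removes a same-type neighbour from
both endpoints, and since the lost neighbour was isolated in the other's neighbourhood, its removal
makes no vertex there newly isolated; so `I` cannot grow to compensate. -/

namespace SimpleGraph

section

variable {V : Type*} (G : SimpleGraph V)

lemma le_addEdge (a b : V) : G ≤ addEdge G a b :=
  fun _ _ h => ⟨Or.inl h, h.ne⟩

lemma addEdge_adj_of_ne {a b : V} (hab : a ≠ b) : (addEdge G a b).Adj a b :=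
  ⟨Or.inr (Or.inl ⟨rfl, rfl⟩), hab⟩

lemma delEdge_comm (a b : V) : delEdge G a b = delEdge G b a := by
  ext x y
  simp only [delEdge]
  tauto

end

variable {V : Type*} [Fintype V] [DecidableEq V] (G : SimpleGraph V) [DecidableRel G.Adj]

lemma neighborFinset_addEdge_of_ne {a b x : V} (hxa : x ≠ a) (hxb : x ≠ b) :
    (addEdge G a b).neighborFinset x = G.neighborFinset x := by
  ext y
  simp only [mem_neighborFinset]
  simp only [addEdge]
  constructor
  · rintro ⟨h | ⟨rfl, -⟩ | ⟨rfl, -⟩, -⟩ <;> first | exact h | contradiction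
  · exact fun h => ⟨Or.inl h, h.ne⟩

lemma neighborFinset_delEdge_self (a b : V) :
    (delEdge G a b).neighborFinset a = (G.neighborFinset a).erase b := by
  ext y
  simp only [mem_neighborFinset, mem_erase]
  simp only [delEdge]
  constructor
  · rintro ⟨h, hne⟩
    exact ⟨fun hy => hne (Or.inl ⟨trivial, hy⟩), h⟩
  · rintro ⟨hy, h⟩
    refine ⟨h, ?_⟩
    rintro (⟨-, hy'⟩ | ⟨-, rfl⟩)
    · exact hy hy'
    · exact G.irrefl h

variable {G}

lemma isoCount_lt_of_le {H : SimpleGraph V} [DecidableRel H.Adj] {x y z : V} (hle : G ≤ H)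
    (hN : H.neighborFinset x = G.neighborFinset x) (hy : y ∈ G.neighborFinset x)
    (hyIso : ∀ w ∈ G.neighborFinset x, ¬ G.Adj y w) (hz : z ∈ G.neighborFinset x)
    (hyz : H.Adj y z) :
    isoCount H x < isoCount G x := by
  unfold isoCount
  rw [hN]
  refine card_lt_card ((ssubset_iff_of_subset ?_).2 ⟨y, mem_filter.2 ⟨hy, hyIso⟩, ?_⟩)
  · exact monotone_filter_right _ fun _ _ hw t ht hwt => hw t ht (hle hwt)
  · exact fun hmem => (mem_filter.1 hmem).2 z hz hyz

lemma isoCount_delEdge_le {a b : V} (hbIso : ∀ z ∈ G.neighborFinset a, ¬ G.Adj b z) :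
    isoCount (delEdge G a b) a ≤ isoCount G a := by
  unfold isoCount
  rw [neighborFinset_delEdge_self]
  refine card_le_card fun y hy => ?_
  obtain ⟨hy, hyIso⟩ := mem_filter.1 hy
  have hyN := mem_of_mem_erase hy
  refine mem_filter.2 ⟨hyN, fun z hz hyz => ?_⟩
  by_cases hzb : z = b
  · subst hzb
    exact hbIso y hyN hyz.symm
  · -- neither `y` nor `z` is `a`, so the edge `yz` survives the deletion
    refine hyIso z (mem_erase.2 ⟨hzb, hz⟩) ⟨hyz, ?_⟩
    have hya := ((mem_neighborFinset _ _ _).1 hyN).ne'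
    have hza := ((mem_neighborFinset _ _ _).1 hz).ne'
    tauto

end SimpleGraph

open SimpleGraph

section Utility

variable {V α : Type*} [Fintype V] [DecidableEq V] [DecidableEq α] {G H : SimpleGraph V}
  [DecidableRel G.Adj] [DecidableRel H.Adj] (τ : V → α) {κ : ℕ} {x : V}

lemma homCapUtil_lt_of_card_add_lt (hκ : 0 < κ)
    (h : #((H.neighborFinset x).filter (fun y => τ y = τ x)) + isoCount H x <
      #((G.neighborFinset x).filter (fun y => τ y = τ x)) + isoCount G x) :
    homCapUtil H τ κ x < homCapUtil G τ κ x := by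
  unfold homCapUtil
  rw [← add_div, ← add_div]
  exact div_lt_div_of_pos_right (by exact_mod_cast h) (by exact_mod_cast hκ)

lemma homCapUtil_addEdge_lt (hκ : 0 < κ) {a b : V} (hab : a ≠ b) (hxa : G.Adj x a)
    (hxb : G.Adj x b) (haIso : ∀ z ∈ G.neighborFinset x, ¬ G.Adj a z) :
    homCapUtil (addEdge G a b) τ κ x < homCapUtil G τ κ x := by
  have hN := neighborFinset_addEdge_of_ne G hxa.ne hxb.ne
  have hiso : isoCount (addEdge G a b) x < isoCount G x :=
    isoCount_lt_of_le (le_addEdge G a b) hN ((mem_neighborFinset _ _ _).2 hxa) haIso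
      ((mem_neighborFinset _ _ _).2 hxb) (addEdge_adj_of_ne G hab)
  apply homCapUtil_lt_of_card_add_lt τ hκ
  rw [hN]
  omega

lemma homCapUtil_delEdge_lt (hκ : 0 < κ) {a b : V} (hab : G.Adj a b) (hτ : τ b = τ a)
    (hbIso : ∀ z ∈ G.neighborFinset a, ¬ G.Adj b z) :
    homCapUtil (delEdge G a b) τ κ a < homCapUtil G τ κ a := by
  have hb : b ∈ (G.neighborFinset a).filter (fun y => τ y = τ a) :=
    mem_filter.2 ⟨(mem_neighborFinset _ _ _).2 hab, hτ⟩
  have htyped := card_erase_lt_of_mem hb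
  rw [← filter_erase, ← neighborFinset_delEdge_self] at htyped
  have hiso := isoCount_delEdge_le hbIso
  apply homCapUtil_lt_of_card_add_lt τ hκ
  omega

end Utility

theorem stmt6_general {V α : Type*} [Fintype V] [DecidableEq V] [DecidableEq α]
    (G : SimpleGraph V) [DecidableRel G.Adj] (τ : V → α) (κ : ℕ) (hκ : 1 ≤ κ)
    (u v w : V) (hvw : v ≠ w)
    (huv : G.Adj u v) (huw : G.Adj u w)
    (hτ : τ u = τ v ∧ τ v = τ w)
    (hvIso : ∀ x ∈ G.neighborFinset u, ¬ G.Adj v x) :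
    homCapUtil (addEdge G v w) τ κ u < homCapUtil G τ κ u ∧
    ((∀ x ∈ G.neighborFinset u, ¬ G.Adj v x) →
     (∀ x ∈ G.neighborFinset v, ¬ G.Adj u x) →
      homCapUtil (delEdge G u v) τ κ u < homCapUtil G τ κ u ∧
      homCapUtil (delEdge G u v) τ κ v < homCapUtil G τ κ v) := by
  refine ⟨homCapUtil_addEdge_lt τ hκ hvw huv huw hvIso, fun _ huIso => ⟨?_, ?_⟩⟩
  · exact homCapUtil_delEdge_lt τ hκ huv hτ.1.symm hvIso
  · convert homCapUtil_delEdge_lt τ hκ huv.symm hτ.1 huIso using 2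
    exact delEdge_comm G u v

theorem stmt6 {V α : Type*} [Fintype V] [DecidableEq V] [DecidableEq α]
    (G : SimpleGraph V) [DecidableRel G.Adj] (τ : V → α) (κ : ℕ) (hκ : 1 ≤ κ)
    (u v w : V) (hvw : v ≠ w)
    (huv : G.Adj u v) (huw : G.Adj u w) (hnvw : ¬ G.Adj v w)
    (hτ : τ u = τ v ∧ τ v = τ w)
    (hvIso : ∀ x ∈ G.neighborFinset u, ¬ G.Adj v x)
    (hwIso : ∀ x ∈ G.neighborFinset u, ¬ G.Adj w x) :
    homCapUtil (addEdge G v w) τ κ u < homCapUtil G τ κ u ∧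
    ((∀ x ∈ G.neighborFinset u, ¬ G.Adj v x) →
     (∀ x ∈ G.neighborFinset v, ¬ G.Adj u x) →
      homCapUtil (delEdge G u v) τ κ u < homCapUtil G τ κ u ∧
      homCapUtil (delEdge G u v) τ κ v < homCapUtil G τ κ v) :=
  stmt6_general G τ κ hκ u v w hvw huv huw hτ hvIso
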